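/- arXiv:1211.6638 — 4 statements merged into one kernel-verified Lean document; each statement's English description precedes it below -/
import Mathlib

section
/- Let p be an odd prime and let f be a polynomial with coefficients in ℚ_p (the field of p-adic numbers). Then the sequence of alternating sums N ↦ Σ_{x=0}^{p^N−1} (−1)^x f(x) (where the natural number x is viewed in ℚ_p) converges in ℚ_p as N → ∞; i.e., the fermionic p-adic integral ∫_{ℤ_p} f(x) dμ_{−1}(x) of the polynomial f exists. -/
open Filter Finset

/-!
Every polynomial `f` over a field of characteristic not two is `g(x) + g(x + 1)` for some
polynomial `g`: the operator `g ↦ g + g(X + 1)` is `2 • id` plus a degree-lowering map.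
Then `(-1)^x f(x) = (-1)^x g(x) - (-1)^(x+1) g(x+1)` telescopes, and since `p^N` is odd,
`∑_{x < p^N} (-1)^x f(x) = g(0) + g(p^N)`, which tends to `2 g(0)` because `p^N → 0` in `ℚ_p`.
-/

namespace Polynomial

variable {K : Type*} [Field K] [NeZero (2 : K)]

theorem X_pow_mem_range_id_add_aeval_X_add_one (n : ℕ) :
    (X ^ n : K[X]) ∈ LinearMap.range (LinearMap.id + (aeval (X + 1 : K[X])).toLinearMap) := by
  induction n using Nat.strong_induction_on with
  | _ n ih =>
    set T := LinearMap.id + (aeval (X + 1 : K[X])).toLinearMap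
    have hlower : (X + 1 : K[X]) ^ n - X ^ n ∈ LinearMap.range T := by
      rw [add_pow, sum_range_succ, one_pow, mul_one, Nat.choose_self, Nat.cast_one, mul_one,
        add_sub_cancel_right]
      refine Submodule.sum_mem _ fun k hk => ?_
      rw [one_pow, mul_one, ← Nat.cast_comm, ← nsmul_eq_mul]
      exact Submodule.smul_of_tower_mem _ _ (ih k (mem_range.mp hk))
    have hT : T ((2 : K)⁻¹ • X ^ n) = (2 : K)⁻¹ • (X ^ n + (X + 1) ^ n) := by
      simp [T, smul_add]
    have hsplit : (X ^ n : K[X]) =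
        T ((2 : K)⁻¹ • X ^ n) - (2 : K)⁻¹ • ((X + 1) ^ n - X ^ n) := by
      have hdouble :
          (X ^ n + (X + 1) ^ n - ((X + 1) ^ n - X ^ n) : K[X]) = (2 : K) • X ^ n := by
        rw [two_smul]; abel
      rw [hT, ← smul_sub, hdouble, smul_smul, inv_mul_cancel₀ two_ne_zero, one_smul]
    rw [hsplit]
    exact Submodule.sub_mem _ (LinearMap.mem_range_self T _) (Submodule.smul_mem _ _ hlower)

theorem exists_add_comp_X_add_one_eq (f : K[X]) : ∃ g : K[X], g + g.comp (X + 1) = f := by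
  suffices f ∈ LinearMap.range (LinearMap.id + (aeval (X + 1 : K[X])).toLinearMap) by
    obtain ⟨g, rfl⟩ := this
    exact ⟨g, by simp [comp_eq_aeval]⟩
  induction f using Polynomial.induction_on' with
  | add f g hf hg => exact Submodule.add_mem _ hf hg
  | monomial n a =>
    rw [← C_mul_X_pow_eq_monomial, ← smul_eq_C_mul]
    exact Submodule.smul_mem _ a (X_pow_mem_range_id_add_aeval_X_add_one n)

end Polynomial

theorem Finset.sum_range_neg_one_pow_mul_add_succ {R : Type*} [CommRing R] (u : ℕ → R)
    (m : ℕ) :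
    ∑ x ∈ range m, (-1 : R) ^ x * (u x + u (x + 1)) = u 0 - (-1) ^ m * u m := by
  have hstep : ∀ x, (-1 : R) ^ x * (u x + u (x + 1)) =
      (-1) ^ x * u x - (-1) ^ (x + 1) * u (x + 1) := fun x => by ring
  simp only [hstep, sum_range_sub' (fun x => (-1 : R) ^ x * u x), pow_zero, one_mul]

/-- For an odd prime `p` and a polynomial `f` over `ℚ_[p]`, the
sequence of alternating sums `N ↦ ∑_{x=0}^{p^N - 1} (-1)^x f(x)` converges in `ℚ_[p]`,
i.e. the fermionic `p`-adic integral of `f` on `ℤ_p` exists. -/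
theorem fermionic_integral_exists (p : ℕ) [Fact p.Prime] (hp : Odd p)
    (f : Polynomial ℚ_[p]) :
    ∃ L : ℚ_[p],
      Tendsto (fun N : ℕ => ∑ x ∈ Finset.range (p ^ N), (-1 : ℚ_[p]) ^ x * f.eval (x : ℚ_[p]))
        atTop (nhds L) := by
  obtain ⟨g, rfl⟩ := Polynomial.exists_add_comp_X_add_one_eq f
  have hsum : ∀ N : ℕ, ∑ x ∈ range (p ^ N),
      (-1 : ℚ_[p]) ^ x * (g + g.comp (Polynomial.X + 1)).eval (x : ℚ_[p]) =
        g.eval 0 + g.eval ((p : ℚ_[p]) ^ N) := fun N => by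
    simpa [hp.pow.neg_one_pow, sub_eq_add_neg] using
      sum_range_neg_one_pow_mul_add_succ (fun x : ℕ => g.eval (x : ℚ_[p])) (p ^ N)
  have hpow : Tendsto (fun N : ℕ => (p : ℚ_[p]) ^ N) atTop (nhds 0) :=
    tendsto_pow_atTop_nhds_zero_of_norm_lt_one Padic.norm_p_lt_one
  exact ⟨_, (tendsto_const_nhds.add ((g.continuous.tendsto 0).comp hpow)).congr
    fun N => (hsum N).symm⟩
end

section
/- Let p be an odd prime, let f be a polynomial with coefficients in ℚ_p, let n ≥ 1 be a natural number, and suppose the sequence N ↦ Σ_{x=0}^{p^N−1} (−1)^x f(x) converges in ℚ_p to L. Then the sequence N ↦ Σ_{x=0}^{p^N−1} (−1)^x f(x+n) converges in ℚ_p to 2 Σ_{l=0}^{n−1} (−1)^{n−1−l} f(l) − (−1)^{n−1} L; that is, ∫_{ℤ_p} f(x+n) dμ_{−1}(x) + (−1)^{n−1} ∫_{ℤ_p} f(x) dμ_{−1}(x) = 2 Σ_{l=0}^{n−1} (−1)^{n−1−l} f(l). -/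
open Filter Finset Topology

/-!
For odd `M` the alternating sums `∑_{x<M} (-1)^x g(x+1)` and `∑_{x<M} (-1)^x g(x)` add up to the
telescoping sum `g 0 + g M`. With `M = p^N` and `g` continuous, `g (p^N) → g 0` since `p^N → 0`
`p`-adically, so shifting the integrand by one turns a limit `L` into `2 g(0) - L`; iterating `n`
times gives the formula.
-/

theorem sum_range_neg_one_pow_mul_succ_add {R : Type*} [CommRing R] {M : ℕ} (hM : Odd M)
    (g : ℕ → R) :
    ∑ x ∈ range M, (-1 : R) ^ x * g (x + 1) + ∑ x ∈ range M, (-1 : R) ^ x * g x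
      = g 0 + g M := by
  rw [← sum_add_distrib]
  calc ∑ x ∈ range M, ((-1 : R) ^ x * g (x + 1) + (-1) ^ x * g x)
      = ∑ x ∈ range M, ((-1 : R) ^ x * g x - (-1) ^ (x + 1) * g (x + 1)) :=
        sum_congr rfl fun x _ => by ring
    _ = g 0 + g M := by rw [sum_range_sub', hM.neg_one_pow]; ring

theorem sum_range_succ_neg_one_pow_sub_mul {R : Type*} [CommRing R] (n : ℕ) (a : ℕ → R) :
    ∑ l ∈ range (n + 1), (-1 : R) ^ (n - l) * a l
      = (-1) ^ n * ∑ l ∈ range (n + 1), (-1) ^ l * a l := by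
  rw [mul_sum]
  refine sum_congr rfl fun l hl => ?_
  have hln : n - l + l = n := Nat.sub_add_cancel (Nat.lt_succ_iff.mp (mem_range.mp hl))
  calc (-1 : R) ^ (n - l) * a l = (-1) ^ (n - l) * (-1) ^ (l + l) * a l := by
        rw [Even.neg_one_pow ⟨l, rfl⟩, mul_one]
    _ = (-1) ^ (n - l + l) * ((-1) ^ l * a l) := by ring
    _ = (-1) ^ n * ((-1) ^ l * a l) := by rw [hln]

/-- The partial sum `S_N(h)` of the fermionic `p`-adic integral of `h`. -/
noncomputable def fermionicSum (p : ℕ) [Fact p.Prime] (h : ℚ_[p] → ℚ_[p]) (N : ℕ) :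
    ℚ_[p] :=
  ∑ x ∈ range (p ^ N), (-1) ^ x * h x

section

variable {p : ℕ} [Fact p.Prime]

theorem fermionicSum_comp_add_one_add (hp : Odd p) (h : ℚ_[p] → ℚ_[p]) (N : ℕ) :
    fermionicSum p (fun x => h (x + 1)) N + fermionicSum p h N = h 0 + h ((p : ℚ_[p]) ^ N) := by
  have := sum_range_neg_one_pow_mul_succ_add (hp.pow (n := N)) fun x : ℕ => h x
  simpa only [fermionicSum, Nat.cast_succ, Nat.cast_zero, Nat.cast_pow] using this

theorem tendsto_fermionicSum_comp_add_one (hp : Odd p) {h : ℚ_[p] → ℚ_[p]}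
    (hh : ContinuousAt h 0) {L : ℚ_[p]} (hL : Tendsto (fermionicSum p h) atTop (𝓝 L)) :
    Tendsto (fermionicSum p fun x => h (x + 1)) atTop (𝓝 (2 * h 0 - L)) := by
  have hpow : Tendsto (fun N => h ((p : ℚ_[p]) ^ N)) atTop (𝓝 (h 0)) :=
    hh.tendsto.comp (tendsto_pow_atTop_nhds_zero_of_norm_lt_one Padic.norm_p_lt_one)
  have hsum : ∀ N, h 0 + h ((p : ℚ_[p]) ^ N) - fermionicSum p h N
      = fermionicSum p (fun x => h (x + 1)) N := fun N => by
    rw [← fermionicSum_comp_add_one_add hp]; ring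
  rw [two_mul]
  exact (((tendsto_const_nhds).add hpow).sub hL).congr hsum

theorem tendsto_fermionicSum_comp_add_nat (hp : Odd p) {h : ℚ_[p] → ℚ_[p]} (hh : Continuous h)
    {L : ℚ_[p]} (hL : Tendsto (fermionicSum p h) atTop (𝓝 L)) (n : ℕ) :
    Tendsto (fermionicSum p fun x => h (x + n)) atTop
      (𝓝 ((-1) ^ n * (L - 2 * ∑ l ∈ range n, (-1) ^ l * h l))) := by
  induction n with
  | zero => simpa only [Nat.cast_zero, add_zero, pow_zero, one_mul, range_zero, sum_empty,
      mul_zero, sub_zero] using hL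
  | succ n ih =>
    have hstep := tendsto_fermionicSum_comp_add_one hp
      (hh.comp (continuous_add_const (n : ℚ_[p]))).continuousAt ih
    have hshift : (fun x => h (x + 1 + n)) = fun x => h (x + (n + 1 : ℕ)) := by
      funext x; push_cast; ring_nf
    have hsq : (-1 : ℚ_[p]) ^ n * (-1) ^ n = 1 := by
      rw [← pow_add]; exact Even.neg_one_pow ⟨n, rfl⟩
    rw [Function.comp_def, hshift] at hstep
    convert hstep using 2
    beta_reduce
    rw [sum_range_succ, zero_add]
    linear_combination 2 * h n * hsq

end

/-- If the fermionic `p`-adic integral of a polynomial `f` exists with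
value `L`, then for `n ≥ 1`, `∫ f(x+n) dμ₋₁(x)` exists and equals
`2 ∑_{l=0}^{n-1} (-1)^{n-1-l} f(l) - (-1)^{n-1} L`. -/
theorem fermionic_integral_shift (p : ℕ) [Fact p.Prime] (hp : Odd p)
    (f : Polynomial ℚ_[p]) (n : ℕ) (hn : 1 ≤ n) (L : ℚ_[p])
    (hL : Tendsto (fun N : ℕ => ∑ x ∈ Finset.range (p ^ N),
        (-1 : ℚ_[p]) ^ x * f.eval (x : ℚ_[p])) atTop (nhds L)) :
    Tendsto (fun N : ℕ => ∑ x ∈ Finset.range (p ^ N),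
        (-1 : ℚ_[p]) ^ x * f.eval ((x : ℚ_[p]) + (n : ℚ_[p]))) atTop
      (nhds (2 * ∑ l ∈ Finset.range n, (-1 : ℚ_[p]) ^ (n - 1 - l) * f.eval (l : ℚ_[p])
        - (-1 : ℚ_[p]) ^ (n - 1) * L)) := by
  obtain ⟨m, rfl⟩ := Nat.exists_eq_add_of_le' hn
  show Tendsto (fermionicSum p fun x => f.eval (x + (m + 1 : ℕ))) atTop _
  convert tendsto_fermionicSum_comp_add_nat hp f.continuous hL (m + 1) using 2
  rw [Nat.add_sub_cancel, sum_range_succ_neg_one_pow_sub_mul, pow_succ]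
  ring
end

section
/- Let p be an odd prime and n a natural number. Then the sequence N ↦ Σ_{x=0}^{p^N−1} (−1)^x x^n converges in ℚ_p to the image of the Euler number E_n under the canonical map ℚ → ℚ_p; that is, ∫_{ℤ_p} x^n dμ_{−1}(x) = E_n. -/
open Filter Finset

/-!
Write `A_M(k) = ∑_{x<M} (-1)^x x^k`. For odd `M` the alternating sum of `(x+1)^m + x^m` telescopes
to `0^m + M^m`, and expanding `(x+1)^m` binomially shows that `A_M` satisfies the Euler recurrence
`∑_{k≤m} C(m,k) A_M(k) + A_M(m) = 2·0^m` up to the error `M^m - 0^m`. Since `‖2‖ = 1` for odd `p`,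
the recurrence can be solved for its last term, and the ultrametric inequality propagates the error
bound `‖M‖` by strong induction: `‖A_{p^N}(n) - E_n‖ ≤ p^{-N}`.
-/

theorem sum_range_neg_one_pow_mul_add_shift {R : Type*} [Ring R] (f : ℕ → R) (M : ℕ) :
    ∑ x ∈ range M, (-1 : R) ^ x * (f (x + 1) + f x) = f 0 - (-1) ^ M * f M := by
  induction M with
  | zero => simp
  | succ M ih => rw [sum_range_succ, ih, pow_succ]; noncomm_ring

def alternatingPowerSum (R : Type*) [Ring R] (M k : ℕ) : R :=
  ∑ x ∈ range M, (-1 : R) ^ x * (x : R) ^ k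

theorem sum_choose_mul_alternatingPowerSum_add_self {R : Type*} [CommRing R] {M : ℕ}
    (hM : Odd M) (m : ℕ) :
    ∑ k ∈ range (m + 1), (m.choose k : R) * alternatingPowerSum R M k
      + alternatingPowerSum R M m = 0 ^ m + (M : R) ^ m := by
  have hshift : ∑ k ∈ range (m + 1), (m.choose k : R) * alternatingPowerSum R M k
      = ∑ x ∈ range M, (-1 : R) ^ x * ((x + 1 : ℕ) : R) ^ m := by
    simp_rw [alternatingPowerSum, Nat.cast_succ, add_pow, one_pow, mul_one, mul_sum]
    rw [sum_comm]
    exact sum_congr rfl fun k _ => sum_congr rfl fun x _ => by ring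
  have htel := sum_range_neg_one_pow_mul_add_shift (fun x => (x : R) ^ m) M
  simp only [hM.neg_one_pow, mul_add, sum_add_distrib] at htel
  rw [hshift, alternatingPowerSum, htel]
  push_cast
  ring

theorem norm_sub_le_of_sum_choose_mul_add_self {K : Type*} [NormedDivisionRing K]
    [IsUltrametricDist K] (h2 : ‖(2 : K)‖ = 1) {a b c c' : ℕ → K} {ε : ℝ}
    (ha : ∀ m, ∑ k ∈ range (m + 1), (m.choose k : K) * a k + a m = c m)
    (hb : ∀ m, ∑ k ∈ range (m + 1), (m.choose k : K) * b k + b m = c' m)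
    (hc : ∀ m, ‖c m - c' m‖ ≤ ε) (m : ℕ) : ‖a m - b m‖ ≤ ε := by
  have hε : 0 ≤ ε := (norm_nonneg _).trans (hc 0)
  induction m using Nat.strong_induction_on with
  | _ m ih =>
  have hsplit : 2 * (a m - b m)
      = (c m - c' m) + ∑ k ∈ range m, -((m.choose k : K) * (a k - b k)) := by
    rw [← ha m, ← hb m, sum_range_succ, sum_range_succ, Nat.choose_self, sum_neg_distrib]
    simp only [mul_sub, sum_sub_distrib]
    push_cast
    noncomm_ring
  have hlower : ‖∑ k ∈ range m, -((m.choose k : K) * (a k - b k))‖ ≤ ε :=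
    IsUltrametricDist.norm_sum_le_of_forall_le_of_nonneg hε fun k hk => by
      rw [norm_neg, norm_mul]
      exact (mul_le_of_le_one_left (norm_nonneg _)
        (IsUltrametricDist.norm_natCast_le_one K _)).trans (ih k (mem_range.mp hk))
  calc ‖a m - b m‖ = ‖2 * (a m - b m)‖ := by rw [norm_mul, h2, one_mul]
    _ ≤ max ‖c m - c' m‖ ‖∑ k ∈ range m, -((m.choose k : K) * (a k - b k))‖ := by
      rw [hsplit]; exact IsUltrametricDist.norm_add_le_max _ _
    _ ≤ ε := max_le (hc m) hlower

theorem sum_choose_mul_add_self_eq_two_mul_zero_pow {E : ℕ → ℚ} (hE0 : E 0 = 1)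
    (hE : ∀ n : ℕ, 1 ≤ n → (∑ k ∈ range (n + 1), (n.choose k : ℚ) * E k) + E n = 0) (m : ℕ) :
    ∑ k ∈ range (m + 1), (m.choose k : ℚ) * E k + E m = 2 * 0 ^ m := by
  rcases Nat.eq_zero_or_pos m with rfl | hm
  · norm_num [hE0]
  · rw [hE m hm, zero_pow hm.ne', mul_zero]

theorem Padic.norm_two_eq_one_of_odd {p : ℕ} [Fact p.Prime] (hp : Odd p) : ‖(2 : ℚ_[p])‖ = 1 := by
  have := Padic.norm_natCast_eq_one_iff (p := p) (n := 2)
  push_cast at this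
  rw [this, Nat.coprime_two_right]
  exact hp

/-- Let `E : ℕ → ℚ` be the Euler numbers, defined by `E 0 = 1` and, for
`n ≥ 1`, `∑_{k=0}^{n} (n choose k) E k + E n = 0`. For an odd prime `p` and `n : ℕ`, the
sequence `N ↦ ∑_{x=0}^{p^N - 1} (-1)^x x^n` converges in `ℚ_[p]` to `E n`, i.e.
`∫_{ℤ_p} x^n dμ₋₁(x) = E_n`. -/
theorem fermionic_integral_monomial_eq_eulerNumber (p : ℕ) [Fact p.Prime] (hp : Odd p)
    (E : ℕ → ℚ) (hE0 : E 0 = 1)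
    (hE : ∀ n : ℕ, 1 ≤ n → (∑ k ∈ Finset.range (n + 1), (n.choose k : ℚ) * E k) + E n = 0)
    (n : ℕ) :
    Tendsto (fun N : ℕ => ∑ x ∈ Finset.range (p ^ N), (-1 : ℚ_[p]) ^ x * (x : ℚ_[p]) ^ n)
      atTop (nhds ((E n : ℚ_[p]))) := by
  have hEuler (m : ℕ) : ∑ k ∈ range (m + 1), (m.choose k : ℚ_[p]) * E k + E m = 2 * 0 ^ m := by
    exact_mod_cast sum_choose_mul_add_self_eq_two_mul_zero_pow hE0 hE m
  have hp_le_one : ‖(p : ℚ_[p])‖ ≤ 1 := Padic.norm_p_lt_one.le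
  have hbound (N : ℕ) : ‖alternatingPowerSum ℚ_[p] (p ^ N) n - E n‖ ≤ ‖(p : ℚ_[p])‖ ^ N := by
    refine norm_sub_le_of_sum_choose_mul_add_self (Padic.norm_two_eq_one_of_odd hp)
      (sum_choose_mul_alternatingPowerSum_add_self hp.pow) hEuler (fun m => ?_) n
    rcases Nat.eq_zero_or_pos m with rfl | hm
    · norm_num
    · rw [zero_pow hm.ne', mul_zero, zero_add, sub_zero, Nat.cast_pow, ← pow_mul, norm_pow]
      exact pow_le_pow_of_le_one (norm_nonneg _) hp_le_one (Nat.le_mul_of_pos_right N hm)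
  rw [tendsto_iff_norm_sub_tendsto_zero]
  exact squeeze_zero (fun _ => norm_nonneg _) hbound
    (tendsto_pow_atTop_nhds_zero_of_lt_one (norm_nonneg _) Padic.norm_p_lt_one)
end

section
/- Let p be an odd prime, n a natural number, and x ∈ ℚ_p. Then the sum of the limits of the sequences N ↦ Σ_{y=0}^{p^N−1} (−1)^y (x+y+1)^n and N ↦ Σ_{y=0}^{p^N−1} (−1)^y (x+y)^n equals 2x^n; that is, ∫_{ℤ_p} (x+y+1)^n dμ_{−1}(y) + ∫_{ℤ_p} (x+y)^n dμ_{−1}(y) = 2x^n. -/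
open Filter Finset

/-!
Write `S_M(f) = ∑_{y<M} (-1)^y f(y)`. For odd `M` the sum telescopes:
`S_M(f(· + 1)) + S_M(f) = f(0) + f(M)`, and with `M = p^N`, `f(y) = (x + y)^n` the right side
tends to `2 x^n` since `p^N → 0`. So everything rests on the convergence of `S_{p^N}(f)`.
Cutting `[0, p^{N+1})` into `p` blocks of length `p^N` (the signs agree blockwise since `p^N` is
odd) gives `S_{p^{N+1}}(f) - S_{p^N}(f) = ∑_i (-1)^i ∑_y (-1)^y (f(i p^N + y) - f(y))`, and `f` is
Lipschitz for the `p`-adic norm on `ℕ`, so by the ultrametric inequality the consecutive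
differences are `O(p^{-N})`.
-/

theorem sum_range_mul_eq_sum_sum {M : Type*} [AddCommMonoid M] (f : ℕ → M) (m k : ℕ) :
    ∑ y ∈ range (m * k), f y = ∑ i ∈ range m, ∑ y ∈ range k, f (i * k + y) := by
  induction m with
  | zero => simp
  | succ m ih => rw [Nat.succ_mul, sum_range_add, ih, sum_range_succ]

section Ring

variable {R : Type*} [Ring R]

theorem alternating_sum_range_mul {k : ℕ} (hk : Odd k) (f : ℕ → R) (m : ℕ) :
    ∑ y ∈ range (m * k), (-1) ^ y * f y =
      ∑ i ∈ range m, (-1) ^ i * ∑ y ∈ range k, (-1) ^ y * f (i * k + y) := by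
  simp_rw [sum_range_mul_eq_sum_sum, mul_sum, pow_add, pow_mul', hk.neg_one_pow, mul_assoc]

theorem alternating_sum_shift_add_alternating_sum {M : ℕ} (hM : Odd M) (f : ℕ → R) :
    ∑ y ∈ range M, (-1) ^ y * f (y + 1) + ∑ y ∈ range M, (-1) ^ y * f y = f 0 + f M := by
  have htelescope := sum_range_sub' (fun y => (-1 : R) ^ y * f y) M
  simp only [pow_succ, hM.neg_one_pow, pow_zero, one_mul, mul_neg_one, neg_mul, sub_neg_eq_add]
    at htelescope
  rw [← htelescope, ← sum_add_distrib]
  exact sum_congr rfl fun y _ => add_comm _ _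

end Ring

section Ultrametric

variable {K : Type*} [NormedField K] [IsUltrametricDist K]

theorem norm_pow_sub_pow_le {a b : K} {C : ℝ} (ha : ‖a‖ ≤ C) (hb : ‖b‖ ≤ C) (n : ℕ) :
    ‖a ^ n - b ^ n‖ ≤ C ^ (n - 1) * ‖a - b‖ := by
  have hC : 0 ≤ C := (norm_nonneg a).trans ha
  rw [← geom_sum₂_mul, norm_mul]
  gcongr
  refine IsUltrametricDist.norm_sum_le_of_forall_le_of_nonneg (by positivity) fun j hj => ?_
  have hj : j ≤ n - 1 := Nat.le_sub_one_of_lt (mem_range.mp hj)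
  calc ‖a ^ j * b ^ (n - 1 - j)‖ ≤ C ^ j * C ^ (n - 1 - j) := by
        rw [norm_mul, norm_pow, norm_pow]; gcongr
    _ = C ^ (n - 1) := by rw [← pow_add, Nat.add_sub_cancel' hj]

theorem norm_add_natCast_pow_sub_pow_le (x : K) (n a b : ℕ) :
    ‖(x + ((a + b : ℕ) : K)) ^ n - (x + b) ^ n‖ ≤ max ‖x‖ 1 ^ (n - 1) * ‖(a : K)‖ := by
  have hle : ∀ c : ℕ, ‖x + c‖ ≤ max ‖x‖ 1 := fun c =>
    (IsUltrametricDist.norm_add_le_max _ _).trans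
      (max_le_max le_rfl (IsUltrametricDist.norm_natCast_le_one K c))
  simpa using norm_pow_sub_pow_le (hle (a + b)) (hle b) n

theorem norm_alternating_sum_range_mul_sub_le {m k : ℕ} (hm : Odd m) (hk : Odd k) (f : ℕ → K)
    {C : ℝ} (hf : ∀ a b : ℕ, ‖f (a + b) - f b‖ ≤ C * ‖(a : K)‖) :
    ‖∑ y ∈ range (m * k), (-1) ^ y * f y - ∑ y ∈ range k, (-1) ^ y * f y‖ ≤ C * ‖(k : K)‖ := by
  have hC : 0 ≤ C := (norm_nonneg _).trans (by simpa using hf 1 0)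
  have hbound : 0 ≤ C * ‖(k : K)‖ := by positivity
  have hsigns : ∑ i ∈ range m, (-1 : K) ^ i = 1 := by
    rw [neg_one_geom_sum, if_neg (Nat.not_even_iff_odd.mpr hm)]
  have hblock : ∑ y ∈ range k, (-1) ^ y * f y =
      ∑ i ∈ range m, (-1) ^ i * ∑ y ∈ range k, (-1) ^ y * f y := by
    rw [← sum_mul, hsigns, one_mul]
  rw [alternating_sum_range_mul hk, hblock, ← sum_sub_distrib]
  simp_rw [← mul_sub, ← sum_sub_distrib, ← mul_sub]
  refine IsUltrametricDist.norm_sum_le_of_forall_le_of_nonneg hbound fun i _ => ?_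
  rw [norm_mul, norm_pow, norm_neg, norm_one, one_pow, one_mul]
  refine IsUltrametricDist.norm_sum_le_of_forall_le_of_nonneg hbound fun y _ => ?_
  rw [norm_mul, norm_pow, norm_neg, norm_one, one_pow, one_mul]
  refine (hf (i * k) y).trans (mul_le_mul_of_nonneg_left ?_ hC)
  rw [Nat.cast_mul, norm_mul]
  exact mul_le_of_le_one_left (norm_nonneg _) (IsUltrametricDist.norm_natCast_le_one K i)

end Ultrametric

theorem Padic.cauchySeq_alternating_sum_range_pow {p : ℕ} [Fact p.Prime] (hp : Odd p)
    (f : ℕ → ℚ_[p]) {C : ℝ} (hf : ∀ a b : ℕ, ‖f (a + b) - f b‖ ≤ C * ‖(a : ℚ_[p])‖) :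
    CauchySeq fun N => ∑ y ∈ range (p ^ N), (-1) ^ y * f y := by
  refine cauchySeq_of_le_geometric (p : ℝ)⁻¹ C
    (inv_lt_one_of_one_lt₀ (mod_cast (Fact.out : p.Prime).one_lt)) fun N => ?_
  rw [dist_comm, dist_eq_norm, pow_succ', ← Padic.norm_p, ← norm_pow, ← Nat.cast_pow]
  exact norm_alternating_sum_range_mul_sub_le hp hp.pow f hf

/-- Let `p` be an odd prime, `n : ℕ` and `x : ℚ_[p]`. Then the limits
`L₁ = lim_N ∑_{y=0}^{p^N-1} (-1)^y (x+y+1)^n` and `L₂ = lim_N ∑_{y=0}^{p^N-1} (-1)^y (x+y)^n`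
exist in `ℚ_[p]` and satisfy `L₁ + L₂ = 2 x^n`; that is,
`∫_{ℤ_p} (x+y+1)^n dμ₋₁(y) + ∫_{ℤ_p} (x+y)^n dμ₋₁(y) = 2 x^n`. -/
theorem fermionic_integral_add_shift_eq_two_pow (p : ℕ) [Fact p.Prime] (hp : Odd p)
    (n : ℕ) (x : ℚ_[p]) :
    ∃ L₁ L₂ : ℚ_[p],
      Tendsto (fun N : ℕ => ∑ y ∈ Finset.range (p ^ N),
          (-1 : ℚ_[p]) ^ y * (x + (y : ℚ_[p]) + 1) ^ n) atTop (nhds L₁) ∧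
      Tendsto (fun N : ℕ => ∑ y ∈ Finset.range (p ^ N),
          (-1 : ℚ_[p]) ^ y * (x + (y : ℚ_[p])) ^ n) atTop (nhds L₂) ∧
      L₁ + L₂ = 2 * x ^ n := by
  obtain ⟨L, hL⟩ := cauchySeq_tendsto_of_complete <|
    Padic.cauchySeq_alternating_sum_range_pow hp (fun y : ℕ => (x + y) ^ n)
      (norm_add_natCast_pow_sub_pow_le x n)
  have hpow : Tendsto (fun N => (x + (p : ℚ_[p]) ^ N) ^ n) atTop (nhds (x ^ n)) := by
    simpa [Function.comp_def] using (((continuous_const_add x).pow n).tendsto 0).comp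
      (tendsto_pow_atTop_nhds_zero_of_norm_lt_one Padic.norm_p_lt_one)
  have hshift : ∀ N, ∑ y ∈ range (p ^ N), (-1 : ℚ_[p]) ^ y * (x + (y : ℚ_[p]) + 1) ^ n =
      x ^ n + (x + (p : ℚ_[p]) ^ N) ^ n -
        ∑ y ∈ range (p ^ N), (-1) ^ y * (x + (y : ℚ_[p])) ^ n := by
    intro N
    rw [eq_sub_iff_add_eq]
    simpa [add_assoc] using
      alternating_sum_shift_add_alternating_sum hp.pow fun y : ℕ => (x + (y : ℚ_[p])) ^ n
  refine ⟨2 * x ^ n - L, L, ?_, hL, sub_add_cancel _ _⟩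
  simp_rw [hshift, two_mul]
  exact (tendsto_const_nhds.add hpow).sub hL
end
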